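/- arXiv:math/0703676 — 9 statements merged into one kernel-verified Lean document; each statement's English description precedes it below -/
import Mathlib

section
/- Let F be a finite field and A a finite subset of F with |A| ≥ 2. Define the ratio set R = (A−A)/(A−A) = {(a₁−a₂)/(b₁−b₂) : a₁, a₂, b₁, b₂ ∈ A, b₁ ≠ b₂}. If |R| ≥ |A|², then there exist a₁, a₂, b₁, b₂ ∈ A with b₁ ≠ b₂ such that |(a₁−a₂)·A + (b₁−b₂)·A| ≥ |A|²/2. -/
open Pointwise Finset

/-!
For `ξ ∈ F` let `E(ξ)` count the solutions of `a + ξ b = a' + ξ b'` in `A`. The solutions with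
`b = b'` are the `|A|²` trivial ones, and any other solution determines `ξ = (a' - a) / (b - b')`,
so `∑_{ξ ∈ R} E(ξ) ≤ |A|⁴ + |R| |A|²`. As `|R| ≥ |A|²`, some `ξ = (a₁ - a₂) / (b₁ - b₂) ∈ R` has
`E(ξ) ≤ 2 |A|²`, and Cauchy–Schwarz gives `|A + ξ A| ≥ |A|⁴ / E(ξ) ≥ |A|² / 2`. Finally
`(b₁ - b₂) (A + ξ A) = (a₁ - a₂) A + (b₁ - b₂) A`.
-/

section Collisions

variable {α β : Type*} [DecidableEq β]

def collisionPairs (s : Finset α) (f : α → β) : Finset (α × α) :=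
  {p ∈ s ×ˢ s | f p.1 = f p.2}

lemma card_collisionPairs_eq_sum_sq (s : Finset α) (f : α → β) :
    #(collisionPairs s f) = ∑ v ∈ s.image f, #{x ∈ s | f x = v} ^ 2 := by
  rw [card_eq_sum_card_fiberwise (s := collisionPairs s f) (f := fun p => f p.1) (t := s.image f)
    fun p hp => mem_image_of_mem f (mem_product.1 (mem_filter.1 hp).1).1]
  refine sum_congr rfl fun v _ => ?_
  rw [sq, ← card_product]
  congr 1
  ext ⟨x, y⟩
  simp only [collisionPairs, mem_filter, mem_product]
  constructor
  · rintro ⟨⟨⟨hx, hy⟩, hxy⟩, rfl⟩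
    exact ⟨⟨hx, rfl⟩, hy, hxy.symm⟩
  · rintro ⟨⟨hx, rfl⟩, hy, hyx⟩
    exact ⟨⟨⟨hx, hy⟩, hyx.symm⟩, rfl⟩

lemma sq_card_le_card_image_mul_card_collisionPairs (s : Finset α) (f : α → β) :
    #s ^ 2 ≤ #(s.image f) * #(collisionPairs s f) := by
  rw [card_collisionPairs_eq_sum_sq, card_eq_sum_card_image f s]
  exact sq_sum_le_card_mul_sum_sq

end Collisions

section Slopes

variable {R : Type*} [Ring R] [DecidableEq R]

lemma image_add_mul_product (A : Finset R) (ξ : R) :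
    (A ×ˢ A).image (fun p => p.1 + ξ * p.2) = A + ξ • A := by
  ext x
  simp [mem_add, mem_smul_finset, and_assoc]

lemma card_filter_snd_eq_collisionPairs_le (A : Finset R) (ξ : R) :
    #{pq ∈ collisionPairs (A ×ˢ A) (fun p => p.1 + ξ * p.2) | pq.1.2 = pq.2.2} ≤ #A ^ 2 := by
  calc _ ≤ #(A ×ˢ A).diag := card_le_card fun pq hpq => ?_
    _ = #A ^ 2 := by rw [diag_card, card_product, sq]
  obtain ⟨⟨hpq, hcol⟩, hsnd⟩ := (mem_filter.1 hpq).imp_left mem_filter.1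
  dsimp only at hcol
  rw [hsnd, add_left_inj] at hcol
  exact mem_diag.2 ⟨(mem_product.1 hpq).1, Prod.ext hcol hsnd⟩

lemma sq_card_le_two_mul_card_add_smul (A : Finset R) (ξ : R) (hA : A.Nonempty)
    (h : #(collisionPairs (A ×ˢ A) (fun p => p.1 + ξ * p.2)) ≤ 2 * #A ^ 2) :
    #A ^ 2 ≤ 2 * #(A + ξ • A) := by
  have cauchySchwarz :=
    sq_card_le_card_image_mul_card_collisionPairs (A ×ˢ A) (fun p => p.1 + ξ * p.2)
  rw [image_add_mul_product, card_product] at cauchySchwarz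
  refine Nat.le_of_mul_le_mul_right ?_ (pow_pos hA.card_pos 2)
  calc #A ^ 2 * #A ^ 2 = (#A * #A) ^ 2 := by ring
    _ ≤ #(A + ξ • A) * (2 * #A ^ 2) := cauchySchwarz.trans (Nat.mul_le_mul_left _ h)
    _ = 2 * #(A + ξ • A) * #A ^ 2 := by ring

variable [NoZeroDivisors R]

lemma pairwiseDisjoint_filter_snd_ne_collisionPairs (A X : Finset R) :
    (X : Set R).PairwiseDisjoint fun ξ =>
      {pq ∈ collisionPairs (A ×ˢ A) (fun p => p.1 + ξ * p.2) | pq.1.2 ≠ pq.2.2} := by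
  intro ξ _ ζ _ hξζ
  refine disjoint_left.2 fun pq hξ hζ => hξζ ?_
  simp only [collisionPairs, mem_filter] at hξ hζ
  have slope {η : R} (h : pq.1.1 + η * pq.1.2 = pq.2.1 + η * pq.2.2) :
      η * (pq.1.2 - pq.2.2) = pq.2.1 - pq.1.1 := by
    rw [mul_sub, sub_eq_sub_iff_add_eq_add, add_comm, h]
  exact mul_right_cancel₀ (sub_ne_zero.2 hξ.2) ((slope hξ.1.2).trans (slope hζ.1.2).symm)

lemma sum_card_collisionPairs_le (A X : Finset R) :
    ∑ ξ ∈ X, #(collisionPairs (A ×ˢ A) (fun p => p.1 + ξ * p.2)) ≤ #X * #A ^ 2 + #A ^ 4 := by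
  simp_rw [← card_filter_add_card_filter_not (s := collisionPairs (A ×ˢ A) _)
    fun pq : (R × R) × R × R => pq.1.2 = pq.2.2, sum_add_distrib]
  gcongr
  · exact sum_le_card_nsmul _ _ _ fun ξ _ => card_filter_snd_eq_collisionPairs_le A ξ
  · rw [← card_biUnion (pairwiseDisjoint_filter_snd_ne_collisionPairs A X)]
    calc _ ≤ #((A ×ˢ A) ×ˢ (A ×ˢ A)) :=
          card_le_card <| biUnion_subset.2 fun _ _ => (filter_subset _ _).trans (filter_subset _ _)
      _ = #A ^ 4 := by rw [card_product, card_product]; ring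

lemma exists_card_collisionPairs_le (A X : Finset R) (hX : X.Nonempty) (h : #A ^ 2 ≤ #X) :
    ∃ ξ ∈ X, #(collisionPairs (A ×ˢ A) (fun p => p.1 + ξ * p.2)) ≤ 2 * #A ^ 2 := by
  refine exists_le_of_sum_le hX ?_
  calc _ ≤ #X * #A ^ 2 + #A ^ 2 * #A ^ 2 := by
        rw [← pow_add]; exact sum_card_collisionPairs_le A X
    _ ≤ #X * #A ^ 2 + #X * #A ^ 2 := by gcongr
    _ = ∑ ξ ∈ X, 2 * #A ^ 2 := by rw [sum_const, smul_eq_mul]; ring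

end Slopes

lemma card_add_smul_div_eq {F : Type*} [Field F] [DecidableEq F] (A : Finset F) (c : F) {d : F}
    (hd : d ≠ 0) : #(A + (c / d) • A) = #(c • A + d • A) := by
  rw [← card_smul_finset₀ hd, smul_add, smul_smul, mul_div_cancel₀ _ hd, add_comm]

theorem garaev_lemma_1_1_general {F : Type*} [Field F] [DecidableEq F]
    (A : Finset F) (hA : 2 ≤ A.card)
    (hR : A.card ^ 2 ≤ ((A - A) / ((A - A).erase 0)).card) :
    ∃ a₁ ∈ A, ∃ a₂ ∈ A, ∃ b₁ ∈ A, ∃ b₂ ∈ A, b₁ ≠ b₂ ∧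
      (A.card : ℝ) ^ 2 / 2 ≤ (((a₁ - a₂) • A + (b₁ - b₂) • A).card : ℝ) := by
  have hA₀ : 0 < #A := by omega
  obtain ⟨ξ, hξ, hE⟩ :=
    exists_card_collisionPairs_le A _ (card_pos.1 ((pow_pos hA₀ 2).trans_le hR)) hR
  obtain ⟨c, hc, d, hd, rfl⟩ := mem_div.1 hξ
  obtain ⟨hd₀, hd⟩ := mem_erase.1 hd
  obtain ⟨a₁, ha₁, a₂, ha₂, rfl⟩ := mem_sub.1 hc
  obtain ⟨b₁, hb₁, b₂, hb₂, rfl⟩ := mem_sub.1 hd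
  refine ⟨a₁, ha₁, a₂, ha₂, b₁, hb₁, b₂, hb₂, sub_ne_zero.1 hd₀, ?_⟩
  have key := sq_card_le_two_mul_card_add_smul A _ (card_pos.1 hA₀) hE
  rw [card_add_smul_div_eq A _ hd₀] at key
  have key' : ((#A ^ 2 : ℕ) : ℝ) ≤ ((2 * #((a₁ - a₂) • A + (b₁ - b₂) • A) : ℕ) : ℝ) :=
    Nat.cast_le.2 key
  push_cast at key'
  linarith

/-- Lemma 1.1: if the ratio set `(A-A)/(A-A)` has size at least `|A|²`, then there are
`a₁, a₂, b₁, b₂ ∈ A` with `b₁ ≠ b₂` and `|(a₁-a₂)A + (b₁-b₂)A| ≥ |A|²/2`. -/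
theorem garaev_lemma_1_1 {F : Type*} [Field F] [Fintype F] [DecidableEq F]
    (A : Finset F) (hA : 2 ≤ A.card)
    (hR : A.card ^ 2 ≤ ((A - A) / ((A - A).erase 0)).card) :
    ∃ a₁ ∈ A, ∃ a₂ ∈ A, ∃ b₁ ∈ A, ∃ b₂ ∈ A, b₁ ≠ b₂ ∧
      (A.card : ℝ) ^ 2 / 2 ≤ (((a₁ - a₂) • A + (b₁ - b₂) • A).card : ℝ) :=
  garaev_lemma_1_1_general A hA hR
end

section
/- Let F be a finite field and A a nonempty finite subset of F. If x ∈ F does not belong to the ratio set (A−A)/(A−A) = {(a₁−a₂)/(b₁−b₂) : a₁, a₂, b₁, b₂ ∈ A, b₁ ≠ b₂}, then |A + x·A| = |A|². -/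
open Pointwise Finset

section RatioSet

variable {F : Type*} [DivisionRing F] [DecidableEq F]

theorem add_smul_finset_eq_image_product (A B : Finset F) (x : F) :
    A + x • B = (A ×ˢ B).image fun p => p.1 + x * p.2 := by
  ext z
  simp only [mem_add, mem_image, mem_product, mem_smul_finset, smul_eq_mul, Prod.exists]
  constructor
  · rintro ⟨a, ha, _, ⟨b, hb, rfl⟩, rfl⟩
    exact ⟨a, b, ⟨ha, hb⟩, rfl⟩
  · rintro ⟨a, b, ⟨ha, hb⟩, rfl⟩
    exact ⟨a, ha, x * b, ⟨b, hb, rfl⟩, rfl⟩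

/-- If `a + x b = a' + x b'` with `b ≠ b'`, then `x = (a - a') / (b' - b)` lies in the ratio set. -/
theorem injOn_add_mul_of_notMem_ratioSet {A B : Finset F} {x : F}
    (hx : x ∉ (A - A) / ((B - B).erase 0)) :
    Set.InjOn (fun p : F × F => p.1 + x * p.2) (A ×ˢ B : Finset (F × F)) := by
  rintro ⟨a, b⟩ hab ⟨a', b'⟩ hab' h
  simp only [coe_product, Set.mem_prod, mem_coe] at hab hab' h
  obtain rfl | hbb := eq_or_ne b b'
  · simpa using h
  · refine absurd (mem_div.2 ⟨a - a', sub_mem_sub hab.1 hab'.1, b' - b, ?_, ?_⟩) hx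
    · exact mem_erase.2 ⟨sub_ne_zero.2 hbb.symm, sub_mem_sub hab'.2 hab.2⟩
    · rw [div_eq_iff (sub_ne_zero.2 hbb.symm), mul_sub]
      linear_combination (norm := noncomm_ring) h

theorem card_add_smul_finset_of_notMem_ratioSet {A B : Finset F} {x : F}
    (hx : x ∉ (A - A) / ((B - B).erase 0)) : #(A + x • B) = #A * #B := by
  rw [add_smul_finset_eq_image_product, card_image_of_injOn (injOn_add_mul_of_notMem_ratioSet hx),
    card_product]

end RatioSet

theorem garaev_lemma_1_2_general {F : Type*} [Field F] [DecidableEq F]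
    (A : Finset F) (x : F)
    (hx : x ∉ (A - A) / ((A - A).erase 0)) :
    (A + x • A).card = A.card ^ 2 := by
  rw [card_add_smul_finset_of_notMem_ratioSet hx, sq]

/-- Lemma 1.2: if `x` is not in the ratio set `(A-A)/(A-A)`, then `|A + xA| = |A|²`. -/
theorem garaev_lemma_1_2 {F : Type*} [Field F] [Fintype F] [DecidableEq F]
    (A : Finset F) (hA : A.Nonempty) (x : F)
    (hx : x ∉ (A - A) / ((A - A).erase 0)) :
    (A + x • A).card = A.card ^ 2 :=
  garaev_lemma_1_2_general A x hx
end

section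
/- Let F be a finite field and A a finite subset of F with |A| ≥ 3. Suppose G is a subfield of F such that the ratio set (A−A)/(A−A) = {(a₁−a₂)/(b₁−b₂) : a₁, a₂, b₁, b₂ ∈ A, b₁ ≠ b₂} is contained in G. Then there exist c, d ∈ F such that A ⊆ cG + d := {cg + d : g ∈ G}. -/
open Pointwise Finset

theorem mem_image_affine_of_sub_div_mem {F : Type*} [Field F] {S : Set F} {a c d : F}
    (hc : c ≠ 0) (h : (a - d) / c ∈ S) : a ∈ (fun g => c * g + d) '' S :=
  ⟨(a - d) / c, h, by field_simp; ring⟩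

theorem sub_div_sub_mem_ratioSet {F : Type*} [Field F] [DecidableEq F] {A : Finset F}
    {a b₁ b₂ : F} (ha : a ∈ A) (hb₁ : b₁ ∈ A) (hb₂ : b₂ ∈ A) (hne : b₁ ≠ b₂) :
    (a - b₂) / (b₁ - b₂) ∈ (A - A) / ((A - A).erase 0) :=
  div_mem_div (sub_mem_sub ha hb₂) (mem_erase.mpr ⟨sub_ne_zero.mpr hne, sub_mem_sub hb₁ hb₂⟩)

theorem garaev_lemma_1_3_general {F : Type*} [Field F] [DecidableEq F]
    (A : Finset F) (hA : 3 ≤ A.card) (G : Subfield F)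
    (hG : (((A - A) / ((A - A).erase 0) : Finset F) : Set F) ⊆ (G : Set F)) :
    ∃ c d : F, (A : Set F) ⊆ (fun g => c * g + d) '' (G : Set F) := by
  obtain ⟨b₁, hb₁, b₂, hb₂, hne⟩ := one_lt_card.mp (show 1 < A.card by omega)
  refine ⟨b₁ - b₂, b₂, fun a ha => mem_image_affine_of_sub_div_mem (sub_ne_zero.mpr hne) ?_⟩
  exact hG (mem_coe.mpr (sub_div_sub_mem_ratioSet ha hb₁ hb₂ hne))

/-- Lemma 1.3: if `|A| ≥ 3` and the ratio set `(A-A)/(A-A)` is contained in a subfield `G`,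
then `A ⊆ cG + d` for some `c, d ∈ F`. -/
theorem garaev_lemma_1_3 {F : Type*} [Field F] [Fintype F] [DecidableEq F]
    (A : Finset F) (hA : 3 ≤ A.card) (G : Subfield F)
    (hG : (((A - A) / ((A - A).erase 0) : Finset F) : Set F) ⊆ (G : Set F)) :
    ∃ c d : F, (A : Set F) ⊆ (fun g => c * g + d) '' (G : Set F) :=
  garaev_lemma_1_3_general A hA G hG
end

section
/- Let F be a finite field, A a finite subset of F, and a, b ∈ F such that a·A ∩ b·A is nonempty. Then |a·A + b·A| ≤ |A+A|² / |a·A ∩ b·A|. -/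
/-! Ruzsa's triangle inequality with middle set `D = aA ∩ bA` gives
`|aA + bA| |D| ≤ |aA + D| |D + bA|`, and each factor on the right is at most
`|aA + aA| = |a(A + A)|`, resp. `|b(A + A)|`, hence at most `|A + A|`. -/

open Pointwise Finset

lemma Finset.card_smul_add_le_card_add {α β : Type*} [AddZeroClass β] [DistribSMul α β]
    [DecidableEq β] (c : α) {A B : Finset β} (hB : B ⊆ c • A) : #(c • A + B) ≤ #(A + A) :=
  calc #(c • A + B) ≤ #(c • A + c • A) := card_le_card (add_subset_add_left hB)
    _ = #(c • (A + A)) := by rw [smul_add]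
    _ ≤ #(A + A) := card_smul_finset_le

theorem garaev_corollary_1_7_sum_general {F : Type*} [Field F] [DecidableEq F]
    (A : Finset F) (a b : F) (h : (a • A ∩ b • A).Nonempty) :
    ((a • A + b • A).card : ℝ) ≤ ((A + A).card : ℝ) ^ 2 / ((a • A ∩ b • A).card : ℝ) := by
  set D := a • A ∩ b • A
  have ruzsa : #(a • A + b • A) * #D ≤ #(a • A + D) * #(D + b • A) :=
    ruzsa_triangle_inequality_add_add_add _ _ _
  have hleft : #(a • A + D) ≤ #(A + A) := card_smul_add_le_card_add a inter_subset_left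
  have hright : #(D + b • A) ≤ #(A + A) := by
    rw [add_comm]
    exact card_smul_add_le_card_add b inter_subset_right
  have hD : (0 : ℝ) < #D := by exact_mod_cast h.card_pos
  rw [le_div_iff₀ hD, sq]
  exact_mod_cast ruzsa.trans (Nat.mul_le_mul hleft hright)

/-- Corollary 1.7, first inequality: `|aA + bA| ≤ |A+A|² / |aA ∩ bA|`. -/
theorem garaev_corollary_1_7_sum {F : Type*} [Field F] [Fintype F] [DecidableEq F]
    (A : Finset F) (a b : F) (h : (a • A ∩ b • A).Nonempty) :
    ((a • A + b • A).card : ℝ) ≤ ((A + A).card : ℝ) ^ 2 / ((a • A ∩ b • A).card : ℝ) :=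
  garaev_corollary_1_7_sum_general A a b h
end

section
/- Let F be a finite field, A a finite subset of F, and a, b ∈ F such that a·A ∩ b·A is nonempty. Then |a·A − b·A| ≤ |A+A|² / |a·A ∩ b·A|. -/
/-!
Ruzsa's triangle inequality with `B = a • A ∩ b • A` gives
`|a • A - b • A| |B| ≤ |a • A + B| |b • A + B|`, and since `B ⊆ c • A` for `c = a, b`, each factor
is at most `|c • A + c • A| = |c • (A + A)| ≤ |A + A|`.
-/

open Pointwise Finset

section

variable {M α : Type*} [Monoid M] [AddMonoid α] [DistribMulAction M α] [DecidableEq α]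

theorem Finset.card_smul_add_smul_le (c : M) (A : Finset α) : #(c • A + c • A) ≤ #(A + A) := by
  rw [← smul_add]
  exact card_smul_finset_le

theorem Finset.card_smul_add_le_of_subset {c : M} {A s : Finset α} (hs : s ⊆ c • A) :
    #(c • A + s) ≤ #(A + A) :=
  (card_le_card (add_subset_add_left hs)).trans (card_smul_add_smul_le c A)

end

theorem garaev_corollary_1_7_diff_general {F : Type*} [Field F] [DecidableEq F]
    (A : Finset F) (a b : F) (h : (a • A ∩ b • A).Nonempty) :
    ((a • A - b • A).card : ℝ) ≤ ((A + A).card : ℝ) ^ 2 / ((a • A ∩ b • A).card : ℝ) := by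
  set B := a • A ∩ b • A
  have hB : (0 : ℝ) < #B := by exact_mod_cast h.card_pos
  have key : #(a • A - b • A) * #B ≤ #(A + A) ^ 2 :=
    calc #(a • A - b • A) * #B ≤ #(a • A + B) * #(b • A + B) :=
          ruzsa_triangle_inequality_sub_add_add _ _ _
      _ ≤ #(A + A) * #(A + A) :=
          Nat.mul_le_mul (card_smul_add_le_of_subset inter_subset_left)
            (card_smul_add_le_of_subset inter_subset_right)
      _ = #(A + A) ^ 2 := (sq _).symm
  rw [le_div_iff₀ hB]
  exact_mod_cast key

/-- Corollary 1.7, second inequality: `|aA − bA| ≤ |A+A|² / |aA ∩ bA|`. -/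
theorem garaev_corollary_1_7_diff {F : Type*} [Field F] [Fintype F] [DecidableEq F]
    (A : Finset F) (a b : F) (h : (a • A ∩ b • A).Nonempty) :
    ((a • A - b • A).card : ℝ) ≤ ((A + A).card : ℝ) ^ 2 / ((a • A ∩ b • A).card : ℝ) :=
  garaev_corollary_1_7_diff_general A a b h
end

section
/- Let F be a finite field, A a nonempty finite subset of F, and a₁, a₂, b ∈ F with a₁ ≠ 0, a₂ ≠ 0, b ≠ 0, such that a₁·A ∩ b·A and a₂·A ∩ b·A are nonempty. Then |a₁a₂·A − b²·A| ≤ |A+A|⁴ / (|a₁·A ∩ b·A| · |a₂·A ∩ b·A| · |A|). -/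
/-!
Put `Y₁ = a₁A ∩ bA` and `Y₂ = a₂A ∩ bA`. Ruzsa's triangle inequality with middle set `a₂Y₁`,
which lies in both `a₁a₂A` and `b(a₂A)`, gives `|a₁a₂A − b²A| |Y₁| ≤ |A+A| |a₂A + bA|`; with
middle set `Y₂` it gives `|a₂A + bA| |Y₂| ≤ |a₂(A+A)| |b(A+A)| ≤ |A+A|²`. Multiply and use
`|A| ≤ |A+A|`.
-/

open Pointwise Finset

namespace Finset

lemma smul_finset_add {α β : Type*} [DecidableEq β] [AddMonoid β] [DistribSMul α β]
    (c : α) (s t : Finset β) : c • (s + t) = c • s + c • t :=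
  image_add (DistribSMul.toAddMonoidHom β c)

lemma card_smul_add_smul_mul_card_inter_le {R : Type*} [Ring R] [DecidableEq R]
    (A : Finset R) (a b : R) : #(a • A + b • A) * #(a • A ∩ b • A) ≤ #(A + A) ^ 2 :=
  calc #(a • A + b • A) * #(a • A ∩ b • A)
      ≤ #(a • A + a • A ∩ b • A) * #(a • A ∩ b • A + b • A) :=
        ruzsa_triangle_inequality_add_add_add _ _ _
    _ ≤ #(a • (A + A)) * #(b • (A + A)) := by
        rw [smul_finset_add, smul_finset_add]
        gcongr
        exacts [inter_subset_left, inter_subset_right]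
    _ ≤ #(A + A) ^ 2 := by
        rw [sq]
        exact Nat.mul_le_mul card_smul_finset_le card_smul_finset_le

lemma card_mul_smul_sub_sq_smul_mul_card_inter_le {F : Type*} [Field F] [DecidableEq F]
    (A : Finset F) {a₁ a₂ : F} (ha₂ : a₂ ≠ 0) (b : F) :
    #((a₁ * a₂) • A - b ^ 2 • A) * #(a₁ • A ∩ b • A) ≤ #(A + A) * #(a₂ • A + b • A) := by
  set Y := a₁ • A ∩ b • A
  have hY₁ : a₂ • Y ⊆ (a₁ * a₂) • A := by
    rw [mul_comm, ← smul_smul]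
    exact smul_finset_subset_smul_finset inter_subset_left
  have hY₂ : a₂ • Y ⊆ b • a₂ • A := by
    rw [smul_comm]
    exact smul_finset_subset_smul_finset inter_subset_right
  calc #((a₁ * a₂) • A - b ^ 2 • A) * #Y
      = #((a₁ * a₂) • A - b ^ 2 • A) * #(a₂ • Y) := by rw [card_smul_finset₀ ha₂]
    _ ≤ #((a₁ * a₂) • A + a₂ • Y) * #(b ^ 2 • A + a₂ • Y) :=
        ruzsa_triangle_inequality_sub_add_add _ _ _
    _ ≤ #((a₁ * a₂) • (A + A)) * #(b • (b • A + a₂ • A)) := by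
        rw [smul_finset_add, smul_finset_add, smul_smul b b, ← sq]
        gcongr
    _ ≤ #(A + A) * #(a₂ • A + b • A) := by
        rw [add_comm (b • A)]
        exact Nat.mul_le_mul card_smul_finset_le card_smul_finset_le

lemma card_mul_smul_sub_sq_smul_mul_le {F : Type*} [Field F] [DecidableEq F]
    (A : Finset F) (a₁ : F) {a₂ : F} (ha₂ : a₂ ≠ 0) (b : F) :
    #((a₁ * a₂) • A - b ^ 2 • A) * (#(a₁ • A ∩ b • A) * #(a₂ • A ∩ b • A) * #A) ≤
      #(A + A) ^ 4 := by
  obtain rfl | hA := A.eq_empty_or_nonempty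
  · simp
  calc _ = #((a₁ * a₂) • A - b ^ 2 • A) * #(a₁ • A ∩ b • A) * #(a₂ • A ∩ b • A) * #A := by ring
    _ ≤ #(A + A) * #(a₂ • A + b • A) * #(a₂ • A ∩ b • A) * #A := by
        gcongr ?_ * _ * _
        exact card_mul_smul_sub_sq_smul_mul_card_inter_le A ha₂ b
    _ = #(A + A) * (#(a₂ • A + b • A) * #(a₂ • A ∩ b • A)) * #A := by ring
    _ ≤ #(A + A) * #(A + A) ^ 2 * #(A + A) := by
        gcongr _ * ?_ * ?_
        exacts [card_smul_add_smul_mul_card_inter_le A a₂ b, card_le_card_add_right hA]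
    _ = #(A + A) ^ 4 := by ring

end Finset

theorem garaev_corollary_1_8_diff_general {F : Type*} [Field F] [DecidableEq F]
    (A : Finset F) (a₁ a₂ b : F)
    (ha₂ : a₂ ≠ 0)
    (h₁ : (a₁ • A ∩ b • A).Nonempty) (h₂ : (a₂ • A ∩ b • A).Nonempty) :
    (((a₁ * a₂) • A - (b ^ 2) • A).card : ℝ) ≤
      ((A + A).card : ℝ) ^ 4 /
        (((a₁ • A ∩ b • A).card : ℝ) * ((a₂ • A ∩ b • A).card : ℝ) * (A.card : ℝ)) := by
  have hA : A.Nonempty := smul_finset_nonempty.mp (h₁.mono inter_subset_right)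
  rw [le_div_iff₀ (by positivity)]
  exact_mod_cast card_mul_smul_sub_sq_smul_mul_le A a₁ ha₂ b

/-- Corollary 1.8, second inequality:
`|a₁a₂A − b²A| ≤ |A+A|⁴ / (|a₁A ∩ bA| |a₂A ∩ bA| |A|)`. -/
theorem garaev_corollary_1_8_diff {F : Type*} [Field F] [Fintype F] [DecidableEq F]
    (A : Finset F) (hA : A.Nonempty) (a₁ a₂ b : F)
    (ha₁ : a₁ ≠ 0) (ha₂ : a₂ ≠ 0) (hb : b ≠ 0)
    (h₁ : (a₁ • A ∩ b • A).Nonempty) (h₂ : (a₂ • A ∩ b • A).Nonempty) :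
    (((a₁ * a₂) • A - (b ^ 2) • A).card : ℝ) ≤
      ((A + A).card : ℝ) ^ 4 /
        (((a₁ • A ∩ b • A).card : ℝ) * ((a₂ • A ∩ b • A).card : ℝ) * (A.card : ℝ)) :=
  garaev_corollary_1_8_diff_general A a₁ a₂ b ha₂ h₁ h₂
end

section
/- Let F be a finite field and A a finite subset of F with 0 ∉ A and |A| ≥ 2. Then there exist an element b₀ ∈ A, a nonempty subset A₁ ⊆ A, and a real number N ≥ 1 such that: (i) for every a ∈ A₁, N ≤ |b₀·A ∩ a·A| ≤ 2N, and (ii) |A₁| · N ≥ |A|³ / (2 |A·A| · (1 + log₂ |A|)). In particular N ≥ |A|² / (2 |A·A| · (1 + log₂ |A|)). -/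
/-!
By Cauchy–Schwarz the multiplicative energy `Eₘ[A] = ∑_{a, b ∈ A} |aA ∩ bA|` is at least
`|A|⁴ / |AA|`, so some row `b₀` has `∑_{a ∈ A} |b₀A ∩ aA| ≥ |A|³ / |AA|`. The summands lie in
`[1, |A|]`, hence in one of the `1 + ⌊log₂ |A|⌋` dyadic ranges `[2ʲ, 2ʲ⁺¹)`; the range carrying
the largest share of the sum gives `A₁` and `N = 2ʲ`.
-/

open Pointwise Finset

open scoped Combinatorics.Additive

namespace Finset

variable {α : Type*} [DecidableEq α] [Mul α]

lemma card_smul_inter_smul_eq_card_filter {a b : α} (ha : IsLeftRegular a)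
    (hb : IsLeftRegular b) (t : Finset α) :
    #(a • t ∩ b • t) = #{cd ∈ t ×ˢ t | a * cd.1 = b * cd.2} := by
  symm
  apply card_nbij (fun cd => a * cd.1)
  · rintro ⟨c, d⟩ hcd
    obtain ⟨⟨hc, hd⟩, h⟩ : (c ∈ t ∧ d ∈ t) ∧ a * c = b * d := by simpa using hcd
    refine mem_inter.2 ⟨smul_mem_smul_finset hc, ?_⟩
    show a * c ∈ b • t
    rw [h]
    exact smul_mem_smul_finset hd
  · rintro ⟨c, d⟩ hcd ⟨c', d'⟩ hcd' h
    obtain ⟨-, hcd⟩ : (c ∈ t ∧ d ∈ t) ∧ a * c = b * d := by simpa using hcd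
    obtain ⟨-, hcd'⟩ : (c' ∈ t ∧ d' ∈ t) ∧ a * c' = b * d' := by simpa using hcd'
    have hc : c = c' := ha h
    have hd : d = d' := hb (hcd.symm.trans (h.trans hcd'))
    rw [hc, hd]
  · intro x hx
    obtain ⟨hxa, hxb⟩ := mem_inter.1 (mem_coe.1 hx)
    obtain ⟨c, hc, rfl⟩ := mem_smul_finset.1 hxa
    obtain ⟨d, hd, hdc⟩ := mem_smul_finset.1 hxb
    exact ⟨(c, d), by simpa [hc, hd] using hdc.symm, rfl⟩

lemma mulEnergy_eq_sum_card_smul_inter_smul {s t : Finset α} (hs : ∀ a ∈ s, IsLeftRegular a) :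
    Eₘ[s, t] = ∑ a ∈ s, ∑ b ∈ s, #(a • t ∩ b • t) := by
  have hfst : ∀ x ∈ {x ∈ (s ×ˢ s) ×ˢ t ×ˢ t | x.1.1 * x.2.1 = x.1.2 * x.2.2}, x.1 ∈ s ×ˢ s :=
    fun x hx => (mem_product.1 (mem_filter.1 hx).1).1
  rw [mulEnergy, card_eq_sum_card_fiberwise hfst, sum_product]
  refine sum_congr rfl fun a ha => sum_congr rfl fun b hb => ?_
  rw [card_smul_inter_smul_eq_card_filter (hs a ha) (hs b hb)]
  refine card_nbij' Prod.snd (fun cd => ((a, b), cd)) ?_ ?_ ?_ fun _ _ => rfl <;>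
    intro x hx <;> simp only [coe_filter, mem_product] at hx ⊢ <;> grind

lemma exists_dyadic_level {ι : Type*} (s : Finset ι) (f : ι → ℕ) {M : ℕ}
    (hf : ∀ i ∈ s, f i ≤ M) :
    ∃ j, ∑ i ∈ s, f i ≤ (Nat.log 2 M + 1) * (#{i ∈ s | Nat.log 2 (f i) = j} * 2 ^ (j + 1)) := by
  have hlevel : ∀ i ∈ s, Nat.log 2 (f i) ∈ range (Nat.log 2 M + 1) := fun i hi =>
    mem_range.2 (Nat.lt_succ_of_le (Nat.log_mono_right (hf i hi)))
  obtain ⟨j, -, hj⟩ := exists_le_of_sum_le (nonempty_range_add_one (n := Nat.log 2 M))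
    (f := fun _ => ∑ i ∈ s, f i)
    (g := fun j => (Nat.log 2 M + 1) * ∑ i ∈ s with Nat.log 2 (f i) = j, f i) (by
      rw [sum_const, card_range, smul_eq_mul, ← mul_sum, sum_fiberwise_of_maps_to hlevel])
  refine ⟨j, hj.trans (Nat.mul_le_mul_left _ ?_)⟩
  rw [← smul_eq_mul]
  refine sum_le_card_nsmul _ _ _ fun i hi => ?_
  rw [← (mem_filter.1 hi).2]
  exact (Nat.lt_pow_succ_log_self one_lt_two _).le

end Finset

lemma two_pow_log_le_and_le_two_mul {n : ℕ} (hn : n ≠ 0) :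
    (2 : ℝ) ^ Nat.log 2 n ≤ n ∧ (n : ℝ) ≤ 2 * 2 ^ Nat.log 2 n := by
  rw [← pow_succ']
  exact ⟨by exact_mod_cast Nat.pow_log_le_self 2 hn,
    by exact_mod_cast (Nat.lt_pow_succ_log_self one_lt_two n).le⟩

lemma div_le_of_sq_mul_sq_le {n P m j : ℕ} (hn : 0 < n) (hP : 0 < P) (hm : m ≤ n)
    (h : n ^ 2 * n ^ 2 ≤ P * (n * ((Nat.log 2 n + 1) * (m * 2 ^ (j + 1))))) :
    (n : ℝ) ^ 3 / (2 * P * (1 + Real.logb 2 n)) ≤ m * 2 ^ j ∧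
      (n : ℝ) ^ 2 / (2 * P * (1 + Real.logb 2 n)) ≤ 2 ^ j := by
  have hn' : (0 : ℝ) < n := by exact_mod_cast hn
  have hm' : (m : ℝ) ≤ n := by exact_mod_cast hm
  have hlog : (Nat.log 2 n : ℝ) ≤ Real.logb 2 n := by exact_mod_cast Real.natLog_le_logb n 2
  have hD : (0 : ℝ) < 2 * P * (1 + Real.logb 2 n) := by
    have : (0 : ℝ) < P := by exact_mod_cast hP
    have : 0 ≤ Real.logb 2 n := (Nat.cast_nonneg _).trans hlog
    positivity
  have hh : (n : ℝ) ^ 2 * n ^ 2 ≤ P * (n * ((Nat.log 2 n + 1) * (m * 2 ^ (j + 1)))) := by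
    exact_mod_cast h
  have hcube : (n : ℝ) ^ 3 / (2 * P * (1 + Real.logb 2 n)) ≤ m * 2 ^ j := by
    rw [div_le_iff₀ hD]
    refine le_of_mul_le_mul_left ?_ hn'
    calc (n : ℝ) * n ^ 3 = n ^ 2 * n ^ 2 := by ring
      _ ≤ (P : ℝ) * (n * ((Nat.log 2 n + 1) * (m * 2 ^ (j + 1)))) := hh
      _ = (n : ℝ) * (m * 2 ^ j * (2 * P * (1 + Nat.log 2 n))) := by ring
      _ ≤ (n : ℝ) * (m * 2 ^ j * (2 * P * (1 + Real.logb 2 n))) := by gcongr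
  refine ⟨hcube, ?_⟩
  calc (n : ℝ) ^ 2 / (2 * P * (1 + Real.logb 2 n))
      = ((n : ℝ) ^ 3 / (2 * P * (1 + Real.logb 2 n))) / n := by field_simp [hn'.ne']
    _ ≤ (m : ℝ) * 2 ^ j / n := by gcongr
    _ ≤ (2 : ℝ) ^ j := by rw [div_le_iff₀ hn', mul_comm]; gcongr

theorem garaev_pigeonhole_general {F : Type*} [Field F] [DecidableEq F]
    (A : Finset F) (h0 : (0 : F) ∉ A) (hA : 2 ≤ A.card) :
    ∃ b₀ ∈ A, ∃ A₁ : Finset F, A₁ ⊆ A ∧ A₁.Nonempty ∧ ∃ N : ℝ, 1 ≤ N ∧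
      (∀ a ∈ A₁, N ≤ ((b₀ • A ∩ a • A).card : ℝ) ∧ ((b₀ • A ∩ a • A).card : ℝ) ≤ 2 * N) ∧
      (A.card : ℝ) ^ 3 / (2 * ((A * A).card : ℝ) * (1 + Real.logb 2 A.card)) ≤
        (A₁.card : ℝ) * N ∧
      (A.card : ℝ) ^ 2 / (2 * ((A * A).card : ℝ) * (1 + Real.logb 2 A.card)) ≤ N := by
  have hAne : A.Nonempty := card_pos.1 (by omega)
  have hreg : ∀ a ∈ A, IsLeftRegular a := fun a ha =>
    mul_right_injective₀ (ne_of_mem_of_not_mem ha h0)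
  obtain ⟨b₀, hb₀, hE⟩ : ∃ b₀ ∈ A, Eₘ[A, A] ≤ #A * ∑ a ∈ A, #(b₀ • A ∩ a • A) := by
    refine exists_le_of_sum_le hAne ?_
    rw [sum_const, smul_eq_mul, ← mul_sum, mulEnergy_eq_sum_card_smul_inter_smul hreg]
  obtain ⟨j, hj⟩ := exists_dyadic_level A (fun a => #(b₀ • A ∩ a • A)) fun a _ =>
    (card_le_card inter_subset_left).trans card_smul_finset_le
  set A₁ := {a ∈ A | Nat.log 2 #(b₀ • A ∩ a • A) = j}
  have hcount : #A ^ 2 * #A ^ 2 ≤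
      #(A * A) * (#A * ((Nat.log 2 #A + 1) * (#A₁ * 2 ^ (j + 1)))) :=
    (le_card_mul_mul_mulEnergy A A).trans
      (Nat.mul_le_mul_left _ (hE.trans (Nat.mul_le_mul_left _ hj)))
  have hA₁ : A₁.Nonempty := by
    refine card_pos.1 (Nat.pos_of_ne_zero fun h => ?_)
    have : 0 < #A ^ 2 * #A ^ 2 := by positivity
    simp only [h, zero_mul, mul_zero] at hcount
    omega
  obtain ⟨hcube, hsq⟩ := div_le_of_sq_mul_sq_le (card_pos.2 hAne) (card_pos.2 (hAne.mul hAne))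
    (card_le_card (filter_subset _ A)) hcount
  refine ⟨b₀, hb₀, A₁, filter_subset _ _, hA₁, 2 ^ j, one_le_pow₀ one_le_two,
    fun a ha => ?_, hcube, hsq⟩
  obtain ⟨haA, rfl⟩ := mem_filter.1 ha
  exact two_pow_log_le_and_le_two_mul (card_ne_zero.2 ⟨b₀ * a, mem_inter.2
    ⟨smul_mem_smul_finset haA, mul_comm a b₀ ▸ smul_mem_smul_finset hb₀⟩⟩)

/-- Dyadic pigeonhole selection of `b₀`, `A₁`, `N` (inequalities (2.1), (2.2)):
there are `b₀ ∈ A`, a nonempty `A₁ ⊆ A` and `N ≥ 1` with `N ≤ |b₀A ∩ aA| ≤ 2N` for all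
`a ∈ A₁`, `|A₁| N ≥ |A|³ / (2|AA|(1 + log₂|A|))` and `N ≥ |A|² / (2|AA|(1 + log₂|A|))`. -/
theorem garaev_pigeonhole {F : Type*} [Field F] [Fintype F] [DecidableEq F]
    (A : Finset F) (h0 : (0 : F) ∉ A) (hA : 2 ≤ A.card) :
    ∃ b₀ ∈ A, ∃ A₁ : Finset F, A₁ ⊆ A ∧ A₁.Nonempty ∧ ∃ N : ℝ, 1 ≤ N ∧
      (∀ a ∈ A₁, N ≤ ((b₀ • A ∩ a • A).card : ℝ) ∧ ((b₀ • A ∩ a • A).card : ℝ) ≤ 2 * N) ∧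
      (A.card : ℝ) ^ 3 / (2 * ((A * A).card : ℝ) * (1 + Real.logb 2 A.card)) ≤
        (A₁.card : ℝ) * N ∧
      (A.card : ℝ) ^ 2 / (2 * ((A * A).card : ℝ) * (1 + Real.logb 2 A.card)) ≤ N :=
  garaev_pigeonhole_general A h0 hA
end

section
/- Let F be a finite field, A a nonempty finite subset of F, b₀ ∈ F with b₀ ≠ 0, N ≥ 1 a real number, and a₁, a₂, b₁, b₂ ∈ F such that |aᵢ·A ∩ b₀·A| ≥ N and |bᵢ·A ∩ b₀·A| ≥ N for i = 1, 2. Then |a₁·A − a₂·A + b₁·A − b₂·A| ≤ |A+A|⁸ / (N⁴ |A|³). -/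
/-!
Write `X = b₀ • A` and `K = |A + A|`. For any finset `Z`, Ruzsa's triangle inequality through
`c • A ∩ X` gives `|Z ± c • A| · |c • A ∩ X| ≤ |Z + X| · |c • A + c • A| ≤ |Z + X| · K`, so each
dilate `c • A` in the signed sumset can be traded for a copy of `X` at the cost of a factor
`K / N`. Doing this four times bounds the sumset by `|4 • X| · K⁴ / N⁴`, and Plünnecke–Ruzsa gives
`|4 • X| ≤ |X + X|⁴ / |X|³ = K⁴ / |A|³` since `b₀ ≠ 0`.
-/

open Pointwise Finset

namespace Finset

variable {G : Type*} [AddCommGroup G] [DecidableEq G]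

lemma card_add_mul_card_inter_le (Z C X : Finset G) :
    #(Z + C) * #(C ∩ X) ≤ #(Z + X) * #(C + C) :=
  calc #(Z + C) * #(C ∩ X) ≤ #(Z + C ∩ X) * #(C ∩ X + C) :=
        ruzsa_triangle_inequality_add_add_add ..
    _ ≤ #(Z + X) * #(C + C) := by gcongr <;> simp

lemma card_sub_mul_card_inter_le (Z C X : Finset G) :
    #(Z - C) * #(C ∩ X) ≤ #(Z + X) * #(C + C) :=
  calc #(Z - C) * #(C ∩ X) ≤ #(Z + C ∩ X) * #(C + C ∩ X) :=
        ruzsa_triangle_inequality_sub_add_add ..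
    _ ≤ #(Z + X) * #(C + C) := by gcongr <;> simp

lemma card_nsmul_mul_card_pow_le (X : Finset G) (n : ℕ) :
    #((n + 1) • X) * #X ^ n ≤ #(X + X) ^ (n + 1) := by
  obtain rfl | hX := X.eq_empty_or_nonempty
  · simp
  have hX₀ : (0 : ℚ≥0) < #X := by simpa using hX.card_pos
  have h := pluennecke_ruzsa_inequality_nsmul_add hX X (n + 1)
  rw [div_pow, pow_succ (#X : ℚ≥0), div_mul_eq_mul_div, mul_div_mul_right _ _ hX₀.ne',
    le_div_iff₀ (by positivity)] at h
  exact_mod_cast h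

variable {M : Type*} [Monoid M] [DistribMulAction M G]

lemma card_smul_add_smul_le_s12 (c : M) (A : Finset G) : #(c • A + c • A) ≤ #(A + A) := by
  rw [← smul_add]
  exact card_smul_finset_le

lemma card_add_smul_mul_card_smul_inter_le (Z A X : Finset G) (c : M) :
    #(Z + c • A) * #(c • A ∩ X) ≤ #(Z + X) * #(A + A) :=
  (card_add_mul_card_inter_le Z _ X).trans (Nat.mul_le_mul_left _ (card_smul_add_smul_le_s12 c A))

lemma card_sub_smul_mul_card_smul_inter_le (Z A X : Finset G) (c : M) :
    #(Z - c • A) * #(c • A ∩ X) ≤ #(Z + X) * #(A + A) :=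
  (card_sub_mul_card_inter_le Z _ X).trans (Nat.mul_le_mul_left _ (card_smul_add_smul_le_s12 c A))

lemma card_smul_sub_smul_add_smul_sub_smul_mul_le (A X : Finset G) (a₁ a₂ b₁ b₂ : M) :
    #(a₁ • A - a₂ • A + b₁ • A - b₂ • A) *
        (#(a₁ • A ∩ X) * #(a₂ • A ∩ X) * #(b₁ • A ∩ X) * #(b₂ • A ∩ X)) ≤
      #(4 • X) * #(A + A) ^ 4 := by
  have h₄ := card_sub_smul_mul_card_smul_inter_le (a₁ • A - a₂ • A + b₁ • A) A X b₂
  have h₃ := card_add_smul_mul_card_smul_inter_le (a₁ • A - a₂ • A + X) A X b₁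
  have h₂ := card_sub_smul_mul_card_smul_inter_le (a₁ • A + X + X) A X a₂
  have h₁ := card_add_smul_mul_card_smul_inter_le (X + X + X) A X a₁
  rw [add_right_comm] at h₄
  rw [← sub_add_eq_add_sub, ← sub_add_eq_add_sub] at h₂
  rw [add_comm (X + X + X), ← add_assoc, ← add_assoc] at h₁
  rw [show 4 • X = X + X + X + X by simp only [succ_nsmul, zero_nsmul, zero_add]]
  calc _ = #(a₁ • A - a₂ • A + b₁ • A - b₂ • A) * #(b₂ • A ∩ X) * #(b₁ • A ∩ X) *
          #(a₂ • A ∩ X) * #(a₁ • A ∩ X) := by ring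
    _ ≤ #(a₁ • A - a₂ • A + X + b₁ • A) * #(A + A) * #(b₁ • A ∩ X) *
          #(a₂ • A ∩ X) * #(a₁ • A ∩ X) := by gcongr
    _ = #(a₁ • A - a₂ • A + X + b₁ • A) * #(b₁ • A ∩ X) *
          #(a₂ • A ∩ X) * #(a₁ • A ∩ X) * #(A + A) := by ring
    _ ≤ #(a₁ • A - a₂ • A + X + X) * #(A + A) *
          #(a₂ • A ∩ X) * #(a₁ • A ∩ X) * #(A + A) := by gcongr
    _ = #(a₁ • A - a₂ • A + X + X) * #(a₂ • A ∩ X) * #(a₁ • A ∩ X) * #(A + A) ^ 2 := by ring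
    _ ≤ #(a₁ • A + X + X + X) * #(A + A) * #(a₁ • A ∩ X) * #(A + A) ^ 2 := by gcongr
    _ = #(a₁ • A + X + X + X) * #(a₁ • A ∩ X) * #(A + A) ^ 3 := by ring
    _ ≤ #(X + X + X + X) * #(A + A) * #(A + A) ^ 3 := by gcongr
    _ = #(X + X + X + X) * #(A + A) ^ 4 := by ring

end Finset

theorem garaev_case_one_estimate_general {F : Type*} [Field F] [DecidableEq F]
    (A : Finset F) (hA : A.Nonempty) (b₀ : F) (hb₀ : b₀ ≠ 0) (N : ℝ) (hN : 1 ≤ N)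
    (a₁ a₂ b₁ b₂ : F)
    (ha₁ : N ≤ ((a₁ • A ∩ b₀ • A).card : ℝ)) (ha₂ : N ≤ ((a₂ • A ∩ b₀ • A).card : ℝ))
    (hb₁ : N ≤ ((b₁ • A ∩ b₀ • A).card : ℝ)) (hb₂ : N ≤ ((b₂ • A ∩ b₀ • A).card : ℝ)) :
    ((a₁ • A - a₂ • A + b₁ • A - b₂ • A).card : ℝ) ≤
      ((A + A).card : ℝ) ^ 8 / (N ^ 4 * (A.card : ℝ) ^ 3) := by
  have hsum := card_smul_sub_smul_add_smul_sub_smul_mul_le A (b₀ • A) a₁ a₂ b₁ b₂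
  have hpl : #(4 • (b₀ • A)) * #A ^ 3 ≤ #(A + A) ^ 4 := by
    have h := (card_nsmul_mul_card_pow_le (b₀ • A) 3).trans
      (Nat.pow_le_pow_left (card_smul_add_smul_le_s12 b₀ A) 4)
    rwa [card_smul_finset₀ hb₀] at h
  have hnat : #(a₁ • A - a₂ • A + b₁ • A - b₂ • A) *
      (#(a₁ • A ∩ b₀ • A) * #(a₂ • A ∩ b₀ • A) * #(b₁ • A ∩ b₀ • A) * #(b₂ • A ∩ b₀ • A)) *
      #A ^ 3 ≤ #(A + A) ^ 8 := by
    calc _ ≤ #(4 • (b₀ • A)) * #(A + A) ^ 4 * #A ^ 3 := by gcongr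
      _ = #(4 • (b₀ • A)) * #A ^ 3 * #(A + A) ^ 4 := by ring
      _ ≤ #(A + A) ^ 4 * #(A + A) ^ 4 := by gcongr
      _ = #(A + A) ^ 8 := by ring
  have hN₀ : 0 ≤ N := zero_le_one.trans hN
  rw [le_div_iff₀ (by have := hA.card_pos; positivity)]
  calc _ = (#(a₁ • A - a₂ • A + b₁ • A - b₂ • A) : ℝ) * (N * N * N * N) * #A ^ 3 := by ring
    _ ≤ (#(a₁ • A - a₂ • A + b₁ • A - b₂ • A) : ℝ) *
        (#(a₁ • A ∩ b₀ • A) * #(a₂ • A ∩ b₀ • A) * #(b₁ • A ∩ b₀ • A) * #(b₂ • A ∩ b₀ • A)) *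
        #A ^ 3 := by gcongr
    _ ≤ _ := by exact_mod_cast hnat

/-- Key estimate in the first case of the Main Theorem:
`|a₁A − a₂A + b₁A − b₂A| ≤ |A+A|⁸ / (N⁴|A|³)`. -/
theorem garaev_case_one_estimate {F : Type*} [Field F] [Fintype F] [DecidableEq F]
    (A : Finset F) (hA : A.Nonempty) (b₀ : F) (hb₀ : b₀ ≠ 0) (N : ℝ) (hN : 1 ≤ N)
    (a₁ a₂ b₁ b₂ : F)
    (ha₁ : N ≤ ((a₁ • A ∩ b₀ • A).card : ℝ)) (ha₂ : N ≤ ((a₂ • A ∩ b₀ • A).card : ℝ))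
    (hb₁ : N ≤ ((b₁ • A ∩ b₀ • A).card : ℝ)) (hb₂ : N ≤ ((b₂ • A ∩ b₀ • A).card : ℝ)) :
    ((a₁ • A - a₂ • A + b₁ • A - b₂ • A).card : ℝ) ≤
      ((A + A).card : ℝ) ^ 8 / (N ^ 4 * (A.card : ℝ) ^ 3) :=
  garaev_case_one_estimate_general A hA b₀ hb₀ N hN a₁ a₂ b₁ b₂ ha₁ ha₂ hb₁ hb₂
end

section
/- Let F be a finite field and A a finite subset of F with |A| ≥ 2. If |(A−A)/(A−A)| ≥ |A|², then there exists x ∈ F such that |A + x·A| ≥ |A|²/2. -/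
open Pointwise Finset

/-!
Every `x` in the ratio set `R = (A - A) / (A - A)` is represented as `(a - c) / (d - b)`
with `a, b, c, d ∈ A`, `b ≠ d`, and there are at most `|A|⁴` such quadruples, so by pigeonhole
some `x` has at most `|A|⁴ / |R| ≤ |A|²` representations. For that `x`, a collision
`a + x b = c + x d` of the map `(a, b) ↦ a + x b` on `A × A` is either trivial (`b = d`, whence
`a = c`) or a representation of `x`; hence there are at most `2 |A|²` collisions, and
Cauchy–Schwarz gives `|A|⁴ ≤ |A + x A| · 2 |A|²`.
-/

section Collisions

variable {α β : Type*} [DecidableEq β]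

def collisions (s : Finset α) (f : α → β) : Finset (α × α) :=
  {pq ∈ s ×ˢ s | f pq.1 = f pq.2}

@[simp]
theorem mem_collisions {s : Finset α} {f : α → β} {pq : α × α} :
    pq ∈ collisions s f ↔ (pq.1 ∈ s ∧ pq.2 ∈ s) ∧ f pq.1 = f pq.2 := by
  simp [collisions]

theorem card_collisions_eq_sum_sq {s : Finset α} {t : Finset β} {f : α → β}
    (hf : Set.MapsTo f s t) :
    #(collisions s f) = ∑ c ∈ t, #{a ∈ s | f a = c} ^ 2 := by
  rw [card_eq_sum_card_fiberwise (f := fun pq => f pq.1)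
    fun pq hpq => hf (mem_collisions.1 hpq).1.1]
  refine sum_congr rfl fun c _ => ?_
  rw [sq, ← card_product, ← filter_product]
  congr 1
  ext ⟨a, b⟩
  simp only [mem_filter, mem_collisions, mem_product]
  constructor
  · rintro ⟨⟨hs, hab⟩, rfl⟩
    exact ⟨hs, rfl, hab.symm⟩
  · rintro ⟨hs, rfl, hb⟩
    exact ⟨⟨hs, hb.symm⟩, rfl⟩

/-- Cauchy–Schwarz over the fibres of `f`. -/
theorem sq_card_le_card_mul_card_collisions {s : Finset α} {t : Finset β} {f : α → β}
    (hf : Set.MapsTo f s t) : #s ^ 2 ≤ #t * #(collisions s f) :=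
  calc #s ^ 2 = (∑ c ∈ t, #{a ∈ s | f a = c}) ^ 2 := by rw [card_eq_sum_card_fiberwise hf]
    _ ≤ #t * ∑ c ∈ t, #{a ∈ s | f a = c} ^ 2 := sq_sum_le_card_mul_sum_sq
    _ = #t * #(collisions s f) := by rw [card_collisions_eq_sum_sq hf]

end Collisions

section RatioSet

variable {F : Type*} [DecidableEq F]

/-- The quadruples `((a, b), (c, d))` over `A` with `b ≠ d`; such a quadruple represents the
element `(a - c) / (d - b)` of the ratio set. -/
def ratioReps (A : Finset F) : Finset ((F × F) × (F × F)) :=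
  {q ∈ (A ×ˢ A) ×ˢ (A ×ˢ A) | q.1.2 ≠ q.2.2}

@[simp]
theorem mem_ratioReps {A : Finset F} {q : (F × F) × (F × F)} :
    q ∈ ratioReps A ↔ (q.1 ∈ A ×ˢ A ∧ q.2 ∈ A ×ˢ A) ∧ q.1.2 ≠ q.2.2 := by
  rw [ratioReps, mem_filter, mem_product]

theorem card_ratioReps_le (A : Finset F) : #(ratioReps A) ≤ #A ^ 4 :=
  calc #(ratioReps A) ≤ #((A ×ˢ A) ×ˢ (A ×ˢ A)) := card_filter_le _ _
    _ = #A ^ 4 := by simp only [card_product]; ring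

variable [Field F]

def quadRatio (q : (F × F) × (F × F)) : F :=
  (q.1.1 - q.2.1) / (q.2.2 - q.1.2)

theorem exists_card_quadRatio_fiber_le {A : Finset F} (hA : A.Nonempty)
    (hR : #A ^ 2 ≤ #((A - A) / ((A - A).erase 0))) :
    ∃ x ∈ (A - A) / ((A - A).erase 0), #{q ∈ ratioReps A | quadRatio q = x} ≤ #A ^ 2 := by
  refine exists_card_fiber_le_of_card_le_mul ?_ ?_
  · rw [← card_pos]
    exact (pow_pos (card_pos.2 hA) 2).trans_le hR
  · calc #(ratioReps A) ≤ #A ^ 2 * #A ^ 2 := by rw [← pow_add]; exact card_ratioReps_le A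
      _ ≤ _ := Nat.mul_le_mul_right _ hR

/-- A nontrivial collision of `(a, b) ↦ a + x b` is a representation of `x` as a ratio. -/
theorem card_collisions_le (A : Finset F) (x : F) :
    #(collisions (A ×ˢ A) fun p => p.1 + x * p.2) ≤
      #A ^ 2 + #{q ∈ ratioReps A | quadRatio q = x} := by
  set C := collisions (A ×ˢ A) fun p => p.1 + x * p.2
  have htrivial : {q ∈ C | q.1.2 = q.2.2} ⊆ (A ×ˢ A).diag := by
    refine subset_iff.2 fun q hq => ?_
    simp only [C, mem_filter, mem_collisions, mem_diag] at hq ⊢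
    obtain ⟨⟨hmem, hcoll⟩, hb⟩ := hq
    rw [hb, add_left_inj] at hcoll
    exact ⟨hmem.1, Prod.ext hcoll hb⟩
  have hnontrivial : {q ∈ C | ¬ q.1.2 = q.2.2} ⊆ {q ∈ ratioReps A | quadRatio q = x} := by
    refine subset_iff.2 fun q hq => ?_
    simp only [C, mem_filter, mem_collisions, mem_ratioReps] at hq ⊢
    obtain ⟨⟨hmem, hcoll⟩, hb⟩ := hq
    refine ⟨⟨hmem, hb⟩, ?_⟩
    rw [quadRatio, div_eq_iff (sub_ne_zero.2 (Ne.symm hb))]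
    linear_combination hcoll
  calc #C = #{q ∈ C | q.1.2 = q.2.2} + #{q ∈ C | ¬ q.1.2 = q.2.2} :=
        (card_filter_add_card_filter_not _).symm
    _ ≤ #(A ×ˢ A).diag + #{q ∈ ratioReps A | quadRatio q = x} :=
        add_le_add (card_le_card htrivial) (card_le_card hnontrivial)
    _ = #A ^ 2 + #{q ∈ ratioReps A | quadRatio q = x} := by rw [diag_card, card_product, sq]

end RatioSet

theorem garaev_pigeonhole_ratio_general {F : Type*} [Field F] [DecidableEq F]
    (A : Finset F)
    (hR : A.card ^ 2 ≤ ((A - A) / ((A - A).erase 0)).card) :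
    ∃ x : F, (A.card : ℝ) ^ 2 / 2 ≤ ((A + x • A).card : ℝ) := by
  obtain rfl | hA := A.eq_empty_or_nonempty
  · exact ⟨0, by simp⟩
  obtain ⟨x, -, hx⟩ := exists_card_quadRatio_fiber_le hA hR
  refine ⟨x, ?_⟩
  have hmaps : Set.MapsTo (fun p : F × F => p.1 + x * p.2) (A ×ˢ A : Finset (F × F))
      (A + x • A : Finset F) := fun p hp =>
    add_mem_add (mem_product.1 hp).1 (smul_mem_smul_finset (mem_product.1 hp).2)
  have hCS : #A ^ 2 * #A ^ 2 ≤ #(A + x • A) * (2 * #A ^ 2) :=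
    calc #A ^ 2 * #A ^ 2 = #(A ×ˢ A) ^ 2 := by rw [card_product, sq, sq]
      _ ≤ #(A + x • A) * #(collisions (A ×ˢ A) fun p => p.1 + x * p.2) :=
        sq_card_le_card_mul_card_collisions hmaps
      _ ≤ #(A + x • A) * (2 * #A ^ 2) := by
        gcongr
        linarith [card_collisions_le A x]
  have hle : #A ^ 2 ≤ #(A + x • A) * 2 :=
    Nat.le_of_mul_le_mul_right (by linarith) (pow_pos (card_pos.2 hA) 2)
  rw [div_le_iff₀ two_pos]
  exact_mod_cast hle

/-- Pigeonhole step in Lemma 1.1: if `|(A-A)/(A-A)| ≥ |A|²`, then there is `x ∈ F`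
with `|A + xA| ≥ |A|²/2`. -/
theorem garaev_pigeonhole_ratio {F : Type*} [Field F] [Fintype F] [DecidableEq F]
    (A : Finset F) (hA : 2 ≤ A.card)
    (hR : A.card ^ 2 ≤ ((A - A) / ((A - A).erase 0)).card) :
    ∃ x : F, (A.card : ℝ) ^ 2 / 2 ≤ ((A + x • A).card : ℝ) :=
  garaev_pigeonhole_ratio_general A hR
end
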